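/- Assume Lusztig's conjectures P1–P15 hold for (W,S,L). Let J be Lusztig's asymptotic ring, the free abelian group on {t_x : x∈W} with product t_x · t_y = Σ_z γ_{xyz} t_{z⁻¹}, and for a left cell 𝔠 let J_ℂ^𝔠 = ⊕_{x∈𝔠} ℂ t_x, a left ideal of J_ℂ = ℂ⊗J. For two left cells 𝔠, 𝔠' and any x ∈ 𝔠⁻¹ ∩ 𝔠', the map φ_x defined by φ_x(t_y) = t_y t_x sends J_ℂ^𝔠 into J_ℂ^{𝔠'}, and as x ranges over 𝔠⁻¹ ∩ 𝔠' the maps φ_x are linearly independent; consequently dim Hom_{J_ℂ}(J_ℂ^𝔠, J_ℂ^{𝔠'}) ≥ |𝔠⁻¹ ∩ 𝔠'|. -/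

import Mathlib

/-!
Right multiplication `φ_x` commutes with the left action of `J_ℂ` because `J` is associative,
and associativity of `J` is the leading coefficient of the identity **P15**. By **P8**,
`t_y t_x` is a combination of `t_z` with `z ∼_L x`, so `φ_x` lands in `J_ℂ^{𝔠'}`. For linear
independence evaluate at the distinguished involution `d ∈ 𝔠` of **P13**: by **P2** and **P7**,
`φ_x(t_d) = γ_{d,x,x⁻¹} t_x`, and **P13** makes `γ_{d,x,x⁻¹}` nonzero for `x ∈ 𝔠⁻¹`, so the
`φ_x(t_d)` are nonzero multiples of distinct basis vectors.
-/

open scoped Classical Pointwise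

noncomputable section

/-! ### Generic Iwahori–Hecke algebras with unequal parameters, and Kazhdan–Lusztig cells -/

/-- The ring `𝒜 = ℤ[v, v⁻¹]` of Laurent polynomials. -/
abbrev 𝒜 : Type := LaurentPolynomial ℤ

/-- `v^k ∈ 𝒜`. -/
def vpow (k : ℤ) : 𝒜 := LaurentPolynomial.T k

/-- The coefficient of `v^k` in a Laurent polynomial. -/
def coeffL (q : 𝒜) (k : ℤ) : ℤ := (AddMonoidAlgebra.coeff q) k

/-- The support (set of exponents) of a Laurent polynomial. -/
def suppL (q : 𝒜) : Finset ℤ := (AddMonoidAlgebra.coeff q).support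

/-- Evaluation of a Laurent polynomial at `v = 1` (the sum of its coefficients). -/
def evalOne (q : 𝒜) : ℤ := (AddMonoidAlgebra.coeff q).sum (fun _ c => c)

/-- The word length of `x` with respect to a generating set `S`. -/
def lenOf {W : Type} [Group W] (S : Set W) (x : W) : ℕ :=
  sInf {k | ∃ l : List W, (∀ s ∈ l, s ∈ S) ∧ l.length = k ∧ l.prod = x}

/-- The data of a finite Coxeter system `(W, S)` together with a positive weight function
`L`, the associated generic Iwahori–Hecke algebra `H` over `𝒜 = ℤ[v,v⁻¹]` with its
standard basis `T` and Kazhdan–Lusztig basis `C` (the latter characterized by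
bar-invariance and triangularity with coefficients in `v⁻¹ℤ[v⁻¹]`). -/
structure KLData (W : Type) [Group W] [Fintype W] where
  /-- the set of simple reflections -/
  S : Set W
  gen : Subgroup.closure S = ⊤
  sq : ∀ s ∈ S, s * s = 1
  /-- the weight function (determined by its values on `S`) -/
  L : W → ℤ
  L_add : ∀ x y : W, lenOf S (x * y) = lenOf S x + lenOf S y → L (x * y) = L x + L y
  L_pos : ∀ s ∈ S, 0 < L s
  /-- the underlying module of the Hecke algebra -/
  H : Type
  [ringH : Ring H]
  [algH : Algebra 𝒜 H]
  /-- the standard basis `{T_x}` of `H` -/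
  T : Module.Basis W 𝒜 H
  T_one : T 1 = 1
  /-- the multiplication rule of the Hecke algebra -/
  Tmul : ∀ s ∈ S, ∀ x : W,
    (lenOf S (s * x) = lenOf S x + 1 → T s * T x = T (s * x)) ∧
    (lenOf S x = lenOf S (s * x) + 1 →
      T s * T x = T (s * x) + (vpow (L s) - vpow (-L s)) • T x)
  /-- the Kazhdan–Lusztig basis `{C_x}` of `H` -/
  C : Module.Basis W 𝒜 H
  /-- the bar involution of `H` -/
  bar : H →+* H
  bar_smul : ∀ (q : 𝒜) (m : H), bar (q • m) = (LaurentPolynomial.invert q) • bar m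
  bar_T : ∀ x : W, bar (T x) * T x⁻¹ = 1 ∧ T x⁻¹ * bar (T x) = 1
  C_bar : ∀ x : W, bar (C x) = C x
  C_diag : ∀ x : W, T.repr (C x) x = 1
  C_small : ∀ x y : W, y ≠ x → ∀ k ∈ suppL (T.repr (C x) y), k < 0

attribute [instance] KLData.ringH KLData.algH

namespace KLData

variable {W : Type} [Group W] [Fintype W] (K : KLData W)

/-- The structure constants `h_{x,y,z}` of `H`: `C_x C_y = Σ_z h_{x,y,z} C_z`. -/
def h (x y z : W) : 𝒜 := K.C.repr (K.C x * K.C y) z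

/-- The coefficients `p_{x,y}` defined by `C_y = Σ_x p_{x,y} T_x`. -/
def pC (x y : W) : 𝒜 := K.T.repr (K.C y) x

/-- One step of the left preorder: `y ⌯ x` if `C_y` occurs with nonzero coefficient in
`C_s C_x` for some `s ∈ S`. -/
def stepLeft (y x : W) : Prop := ∃ s ∈ K.S, K.h s x y ≠ 0

/-- The Kazhdan–Lusztig left preorder `≤_𝓛`, the transitive-reflexive closure of
`stepLeft`. -/
def leftLE (y x : W) : Prop := Relation.ReflTransGen K.stepLeft y x

/-- The right preorder `≤_𝓡`:  `y ≤_𝓡 x ↔ y⁻¹ ≤_𝓛 x⁻¹`. -/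
def rightLE (y x : W) : Prop := K.leftLE y⁻¹ x⁻¹

/-- The two-sided preorder `≤_𝓛𝓡`, generated by `≤_𝓛` and `≤_𝓡`. -/
def lrLE (y x : W) : Prop :=
  Relation.ReflTransGen (fun u w => K.stepLeft u w ∨ K.stepLeft u⁻¹ w⁻¹) y x

/-- Equivalence in the left preorder: `x ∼_𝓛 y`. -/
def sameLeftCell (x y : W) : Prop := K.leftLE x y ∧ K.leftLE y x

/-- Equivalence in the right preorder. -/
def sameRightCell (x y : W) : Prop := K.rightLE x y ∧ K.rightLE y x

/-- Equivalence in the two-sided preorder. -/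
def sameLRCell (x y : W) : Prop := K.lrLE x y ∧ K.lrLE y x

/-- The Kazhdan–Lusztig left cells: equivalence classes of `∼_𝓛`. -/
def IsLeftCell (c : Set W) : Prop := ∃ x : W, c = {y | K.sameLeftCell y x}

/-- Lusztig's function `a : W → ℕ`: `a(z)` is the smallest nonnegative integer with
`h_{x,y,z} ∈ v^{a(z)} ℤ[v⁻¹]` for all `x, y ∈ W`. -/
def aF (z : W) : ℕ := sInf {m : ℕ | ∀ x y : W, ∀ k ∈ suppL (K.h x y z), k ≤ (m : ℤ)}

/-- The leading coefficients `γ_{x,y,z}`: the constant term of `v^{-a(z⁻¹)} h_{x,y,z⁻¹}`. -/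
def γ (x y z : W) : ℤ := coeffL (K.h x y z⁻¹) (K.aF z⁻¹)

/-- `Δ(z)`, defined by `p_{1,z} = n_z v^{-Δ(z)} + (lower order terms)`. -/
def Δ (z : W) : ℤ := -(WithBot.unbotD 0 (suppL (K.pC 1 z)).max)

/-- The leading coefficient `n_z` of `p_{1,z}`. -/
def nF (z : W) : ℤ := coeffL (K.pC 1 z) (-(K.Δ z))

/-- The set `𝒟 = {z ∈ W | a(z) = Δ(z)}` of distinguished involutions. -/
def Dset : Set W := {z | (K.aF z : ℤ) = K.Δ z}

/-- The `a`-function of a parabolic subgroup `W_I`, computed in terms of `W_I`. -/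
def aFrel (I : Set W) (z : W) : ℕ :=
  sInf {m : ℕ | ∀ x ∈ Subgroup.closure I, ∀ y ∈ Subgroup.closure I,
    ∀ k ∈ suppL (K.h x y z), k ≤ (m : ℤ)}

/-- The matrix of the action of `w ∈ W` on the left cell module `[𝔠]` in the basis
`{e_y | y ∈ 𝔠}`, obtained by restriction of scalars at `v ↦ 1`:  `w` acts through `T_w`,
and `T_w C_y = Σ_z (C-repr) C_z`. -/
def cellMat (c : Set W) (w : W) : Matrix c c ℂ :=
  fun z y => (evalOne (K.C.repr (K.T w * K.C (y : W)) (z : W)) : ℂ)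

/-- The space `Hom_W([𝔠], [𝔠'])` of intertwining operators between two left cell
modules. -/
def intertwiners (c c' : Set W) : Submodule ℂ (Matrix c' c ℂ) where
  carrier := {f | ∀ w : W, K.cellMat c' w * f = f * K.cellMat c w}
  add_mem' := by
    intro a b ha hb w
    rw [Matrix.mul_add, ha w, hb w, Matrix.add_mul]
  zero_mem' := by intro w; simp
  smul_mem' := by
    intro q a ha w
    rw [Matrix.mul_smul, ha w, Matrix.smul_mul]

end KLData

/-! ### Lusztig's conjectures P1–P15 -/

/-- The two-variable Laurent polynomial ring `ℤ[v^{±1}, v'^{±1}]`. -/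
abbrev 𝒜₂ : Type := LaurentPolynomial 𝒜

/-- The inclusion `𝒜 → 𝒜₂` keeping the variable `v`. -/
def keepV : 𝒜 → 𝒜₂ := LaurentPolynomial.C

/-- The inclusion `𝒜 → 𝒜₂` substituting `v ↦ v'`. -/
def subV' (q : 𝒜) : 𝒜₂ :=
  (AddMonoidAlgebra.coeff q).sum
    (fun k c => (LaurentPolynomial.C (LaurentPolynomial.C c)) * LaurentPolynomial.T k)

/-- Lusztig's conjectures **P1–P15** for an unequal parameter Hecke algebra
(see [Lusztig, *Hecke algebras with unequal parameters*, §14]). -/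
structure LusztigProps {W : Type} [Group W] [Fintype W] (K : KLData W) : Prop where
  P1 : ∀ z : W, (K.aF z : ℤ) ≤ K.Δ z
  P2 : ∀ d ∈ K.Dset, ∀ x y : W, K.γ x y d ≠ 0 → x = y⁻¹
  P3 : ∀ y : W, ∃! d, d ∈ K.Dset ∧ K.γ y⁻¹ y d ≠ 0
  P4 : ∀ z' z : W, K.lrLE z' z → K.aF z ≤ K.aF z'
  P5 : ∀ d ∈ K.Dset, ∀ y : W, K.γ y⁻¹ y d ≠ 0 →
    K.γ y⁻¹ y d = K.nF d ∧ (K.nF d = 1 ∨ K.nF d = -1)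
  P6 : ∀ d ∈ K.Dset, d * d = 1
  P7 : ∀ x y z : W, K.γ x y z = K.γ y z x
  P8 : ∀ x y z : W, K.γ x y z ≠ 0 →
    K.sameLeftCell x y⁻¹ ∧ K.sameLeftCell y z⁻¹ ∧ K.sameLeftCell z x⁻¹
  P9 : ∀ z' z : W, K.leftLE z' z → K.aF z' = K.aF z → K.sameLeftCell z' z
  P10 : ∀ z' z : W, K.rightLE z' z → K.aF z' = K.aF z → K.sameRightCell z' z
  P11 : ∀ z' z : W, K.lrLE z' z → K.aF z' = K.aF z → K.sameLRCell z' z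
  P12 : ∀ I ⊆ K.S, ∀ y ∈ Subgroup.closure I, K.aFrel I y = K.aF y
  P13 : ∀ c : Set W, K.IsLeftCell c → ∃ d ∈ c, d ∈ K.Dset ∧
    (∀ d' ∈ c, d' ∈ K.Dset → d' = d) ∧ ∀ x ∈ c, K.γ x⁻¹ x d ≠ 0
  P14 : ∀ z : W, K.sameLRCell z z⁻¹
  P15 : ∀ w x x' y : W, K.aF w = K.aF y →
    ∑ y' : W, subV' (K.h w x' y') * keepV (K.h x y' y) =
      ∑ y' : W, keepV (K.h x w y') * subV' (K.h y' x' y)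

end

noncomputable section
open scoped Pointwise

namespace KLData

variable {W : Type} [Group W] [Fintype W] (K : KLData W)

/-- The multiplication of Lusztig's asymptotic ring `J_ℂ`, on the underlying space
`W → ℂ` with basis `{t_x}`:  `t_x · t_y = Σ_z γ_{x,y,z} t_{z⁻¹}`. -/
def Jmul (u w : W → ℂ) : W → ℂ :=
  fun t => ∑ x : W, ∑ y : W, u x * w y * (K.γ x y t⁻¹ : ℂ)

/-- The subspace `J_ℂ^𝔠 = ⊕_{x ∈ 𝔠} ℂ t_x` of `J_ℂ` attached to a left cell `𝔠`. -/
def Jc (_K : KLData W) (c : Set W) : Submodule ℂ (W → ℂ) where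
  carrier := {f | ∀ x ∉ c, f x = 0}
  add_mem' := by intro a b ha hb x hx; simp [ha x hx, hb x hx]
  zero_mem' := by intro x hx; rfl
  smul_mem' := by intro q a ha x hx; simp [ha x hx]

/-- Right multiplication `φ_x : f ↦ f · t_x` by the basis element `t_x` of `J_ℂ`,
as a linear endomorphism of `J_ℂ`. -/
def phi (x : W) : (W → ℂ) →ₗ[ℂ] (W → ℂ) where
  toFun f := K.Jmul f (Pi.single x 1)
  map_add' f g := by
    funext t
    simp [Jmul, add_mul, Finset.sum_add_distrib]
  map_smul' q f := by
    funext t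
    simp [Jmul, Finset.mul_sum, mul_assoc]

lemma Jmul_add₂ (u : W → ℂ) (f g : W → ℂ) :
    K.Jmul u (f + g) = K.Jmul u f + K.Jmul u g := by
  funext t
  simp [Jmul, mul_add, add_mul, Finset.sum_add_distrib]

lemma Jmul_zero₂ (u : W → ℂ) : K.Jmul u (0 : W → ℂ) = 0 := by
  funext t; simp [Jmul]

lemma Jmul_smul₂ (u : W → ℂ) (q : ℂ) (f : W → ℂ) :
    K.Jmul u (q • f) = q • K.Jmul u f := by
  funext t
  simp only [Jmul, Pi.smul_apply, smul_eq_mul, Finset.mul_sum]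
  refine Finset.sum_congr rfl fun x _ => Finset.sum_congr rfl fun y _ => by ring

/-- The space `Hom_{J_ℂ}(J_ℂ^𝔠, J_ℂ^{𝔠'})` of `J_ℂ`-module homomorphisms:  linear maps
`F : J_ℂ^𝔠 → J_ℂ` taking values in `J_ℂ^{𝔠'}` and commuting with the left `J_ℂ`-action
(recall that, granted **P8**, `J_ℂ^𝔠` is a left ideal of `J_ℂ`). -/
def HomJ (c c' : Set W) : Submodule ℂ (↥(K.Jc c) →ₗ[ℂ] (W → ℂ)) where
  carrier := {F | (∀ m : ↥(K.Jc c), F m ∈ K.Jc c') ∧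
    ∀ (u : W → ℂ) (m m' : ↥(K.Jc c)), (m' : W → ℂ) = K.Jmul u (m : W → ℂ) →
      F m' = K.Jmul u (F m)}
  add_mem' := by
    rintro F G ⟨hF1, hF2⟩ ⟨hG1, hG2⟩
    refine ⟨fun m => (K.Jc c').add_mem (hF1 m) (hG1 m), ?_⟩
    intro u m m' hm
    simp [hF2 u m m' hm, hG2 u m m' hm, K.Jmul_add₂]
  zero_mem' := by
    refine ⟨fun m => (K.Jc c').zero_mem, ?_⟩
    intro u m m' hm
    simp [K.Jmul_zero₂]
  smul_mem' := by
    rintro q F ⟨hF1, hF2⟩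
    refine ⟨fun m => (K.Jc c').smul_mem q (hF1 m), ?_⟩
    intro u m m' hm
    simp [hF2 u m m' hm, K.Jmul_smul₂]

end KLData

section StructureConstants

variable {ι R : Type*} [Fintype ι] [CommSemiring R]

/-- The product on `ι → R` with structure constants `G`: `e_x e_y = ∑ t, G x y t • e_t`. -/
def structConstMul (G : ι → ι → ι → R) (u w : ι → R) : ι → R :=
  fun t => ∑ x, ∑ y, u x * w y * G x y t

theorem structConstMul_assoc (G : ι → ι → ι → R)
    (hG : ∀ a b y t, ∑ p, G a b p * G p y t = ∑ q, G b y q * G a q t) (u m w : ι → R) :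
    structConstMul G (structConstMul G u m) w = structConstMul G u (structConstMul G m w) := by
  funext t
  calc structConstMul G (structConstMul G u m) w t
      = ∑ a, ∑ b, ∑ y, u a * m b * w y * ∑ p, G a b p * G p y t := by
        simp only [structConstMul, Finset.sum_mul, Finset.mul_sum]
        rw [Finset.sum_comm_cycle]
        refine Finset.sum_congr rfl fun a _ => ?_
        rw [Finset.sum_comm_cycle]
        refine Finset.sum_congr rfl fun b _ => ?_
        rw [Finset.sum_comm]
        exact Finset.sum_congr rfl fun y _ => Finset.sum_congr rfl fun p _ => by ring
    _ = structConstMul G u (structConstMul G m w) t := by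
        simp only [structConstMul, hG, Finset.sum_mul, Finset.mul_sum]
        refine Finset.sum_congr rfl fun a _ => ?_
        rw [Finset.sum_comm_cycle]
        exact Finset.sum_congr rfl fun b _ => Finset.sum_congr rfl fun y _ =>
          Finset.sum_congr rfl fun p _ => by ring

end StructureConstants

/-- The coefficient of `v'^k v^n` in an element of `𝒜₂`. -/
def coeff2 (q : 𝒜₂) (k n : ℤ) : ℤ := coeffL (q.coeff k) n

lemma coeff2_sum {ι : Type*} (s : Finset ι) (f : ι → 𝒜₂) (k n : ℤ) :
    coeff2 (∑ i ∈ s, f i) k n = ∑ i ∈ s, coeff2 (f i) k n := by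
  simp only [coeff2, coeffL, AddMonoidAlgebra.coeff_sum, Finset.sum_apply']

lemma coeff_subV' (p : 𝒜) (k : ℤ) : (subV' p).coeff k = LaurentPolynomial.C (coeffL p k) := by
  simp only [subV', ← LaurentPolynomial.single_eq_C_mul_T, AddMonoidAlgebra.coeff_finsuppSum,
    AddMonoidAlgebra.coeff_single, Finsupp.sum_apply, Finsupp.single_apply]
  rw [Finsupp.sum_ite_eq']
  split_ifs with hk
  · rfl
  · rw [coeffL, Finsupp.notMem_support_iff.mp hk, map_zero]

lemma coeff_mul_keepV (q : 𝒜₂) (r : 𝒜) (k : ℤ) : (q * keepV r).coeff k = q.coeff k * r := by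
  rw [keepV, ← LaurentPolynomial.single_eq_C]
  exact AddMonoidAlgebra.coeff_mul_single_eq_coeff_mul k (by simp)

lemma coeffL_C_mul (c : ℤ) (r : 𝒜) (n : ℤ) :
    coeffL (LaurentPolynomial.C c * r) n = c * coeffL r n := by
  rw [← LaurentPolynomial.single_eq_C]
  exact AddMonoidAlgebra.coeff_single_mul_eq_mul_coeff n (by simp)

lemma coeff2_subV'_mul_keepV (p r : 𝒜) (k n : ℤ) :
    coeff2 (subV' p * keepV r) k n = coeffL p k * coeffL r n := by
  rw [coeff2, coeff_mul_keepV, coeff_subV', coeffL_C_mul]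

namespace KLData

variable {W : Type} [Group W] [Fintype W] {K : KLData W}

lemma sameLeftCell_symm {x y : W} (h : K.sameLeftCell x y) : K.sameLeftCell y x := ⟨h.2, h.1⟩

lemma sameLeftCell_trans {x y z : W} (h : K.sameLeftCell x y) (h' : K.sameLeftCell y z) :
    K.sameLeftCell x z := ⟨h.1.trans h'.1, h'.2.trans h.2⟩

lemma IsLeftCell.mem_of_sameLeftCell {c : Set W} (hc : K.IsLeftCell c) {x y : W} (hx : x ∈ c)
    (hxy : K.sameLeftCell x y) : y ∈ c := by
  obtain ⟨x₀, rfl⟩ := hc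
  exact sameLeftCell_trans (sameLeftCell_symm hxy) hx

lemma lrLE_of_leftLE {x y : W} (h : K.leftLE x y) : K.lrLE x y :=
  Relation.ReflTransGen.mono (fun _ _ hs => Or.inl hs) _ _ h

lemma coeffL_h_aF (x y z : W) : coeffL (K.h x y z) (K.aF z) = K.γ x y z⁻¹ := by
  rw [γ, inv_inv]

lemma phi_apply (x : W) (f : W → ℂ) (t : W) : K.phi x f t = ∑ p, f p * K.γ p x t⁻¹ := by
  simp [phi, Jmul, Pi.single_apply]

end KLData

namespace LusztigProps

open KLData

variable {W : Type} [Group W] [Fintype W] {K : KLData W}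

lemma aF_eq_of_sameLeftCell (hP : LusztigProps K) {x y : W} (h : K.sameLeftCell x y) :
    K.aF x = K.aF y :=
  le_antisymm (hP.P4 y x (lrLE_of_leftLE h.2)) (hP.P4 x y (lrLE_of_leftLE h.1))

lemma aF_inv (hP : LusztigProps K) (z : W) : K.aF z⁻¹ = K.aF z :=
  le_antisymm (hP.P4 z z⁻¹ (hP.P14 z).1) (hP.P4 z⁻¹ z (hP.P14 z).2)

lemma aF_eq_of_γ_ne_zero (hP : LusztigProps K) {x y z : W} (h : K.γ x y z ≠ 0) :
    K.aF x = K.aF y ∧ K.aF y = K.aF z := by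
  obtain ⟨hxy, hyz, -⟩ := hP.P8 x y z h
  exact ⟨(hP.aF_eq_of_sameLeftCell hxy).trans (hP.aF_inv y),
    (hP.aF_eq_of_sameLeftCell hyz).trans (hP.aF_inv z)⟩

/-- The coefficient of `v'^{a(t)} v^{a(t)}` in **P15**: by **P8** every term that can contribute
has `a(p) = a(t)`, so these coefficients are the `γ`'s. When `a(b) ≠ a(t)`, **P8** kills both
sides. -/
lemma γ_assoc (hP : LusztigProps K) (a b y t : W) :
    ∑ p, K.γ a b p⁻¹ * K.γ p y t⁻¹ = ∑ q, K.γ b y q⁻¹ * K.γ a q t⁻¹ := by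
  have leading : ∀ x y p : W, ∀ n : ℤ, (n ≠ 0 → K.aF p = K.aF t) →
      coeffL (K.h x y p) (K.aF t) * n = K.γ x y p⁻¹ * n := by
    intro x y p n hp
    rcases eq_or_ne n 0 with rfl | hn
    · simp
    · rw [← hp hn, coeffL_h_aF]
  by_cases hbt : K.aF b = K.aF t
  · have h15 := congrArg (fun q : 𝒜₂ => coeff2 q (K.aF t) (K.aF t)) (hP.P15 b a y t hbt)
    simp only [coeff2_sum, mul_comm (keepV _), coeff2_subV'_mul_keepV, coeffL_h_aF] at h15
    calc ∑ p, K.γ a b p⁻¹ * K.γ p y t⁻¹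
        = ∑ p, K.γ p y t⁻¹ * coeffL (K.h a b p) (K.aF t) := by
          refine Finset.sum_congr rfl fun p _ => ?_
          rw [mul_comm (K.γ p y t⁻¹), leading a b p _ fun hp => ?_]
          obtain ⟨hpy, hyt⟩ := hP.aF_eq_of_γ_ne_zero hp
          exact (hpy.trans hyt).trans (hP.aF_inv t)
      _ = ∑ q, coeffL (K.h b y q) (K.aF t) * K.γ a q t⁻¹ := h15.symm
      _ = ∑ q, K.γ b y q⁻¹ * K.γ a q t⁻¹ :=
          Finset.sum_congr rfl fun q _ => leading b y q _ fun hq =>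
            (hP.aF_eq_of_γ_ne_zero hq).2.trans (hP.aF_inv t)
  · refine (Finset.sum_eq_zero fun p _ => ?_).trans (Finset.sum_eq_zero fun q _ => ?_).symm
    all_goals
      by_contra hne
      obtain ⟨h₁, h₂⟩ := mul_ne_zero_iff.mp hne
      have e₁ := hP.aF_eq_of_γ_ne_zero h₁
      have e₂ := hP.aF_eq_of_γ_ne_zero h₂
      simp only [hP.aF_inv] at e₁ e₂
      omega

lemma Jmul_assoc (hP : LusztigProps K) (u m w : W → ℂ) :
    K.Jmul (K.Jmul u m) w = K.Jmul u (K.Jmul m w) :=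
  structConstMul_assoc (fun x y t => (K.γ x y t⁻¹ : ℂ))
    (fun a b y t => mod_cast hP.γ_assoc a b y t) u m w

lemma phi_mem_Jc (hP : LusztigProps K) {c : Set W} (hc : K.IsLeftCell c) {x : W} (hx : x ∈ c)
    (f : W → ℂ) : K.phi x f ∈ K.Jc c := by
  intro t ht
  rw [phi_apply]
  refine Finset.sum_eq_zero fun p _ => mul_eq_zero_of_right _ (Int.cast_eq_zero.mpr ?_)
  by_contra hγ
  have hxt := (hP.P8 p x t⁻¹ hγ).2.1
  rw [inv_inv] at hxt
  exact ht (hc.mem_of_sameLeftCell hx hxt)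

lemma phi_domRestrict_mem_HomJ (hP : LusztigProps K) {c c' : Set W} (hc' : K.IsLeftCell c')
    {x : W} (hx : x ∈ c') : (K.phi x).domRestrict (K.Jc c) ∈ K.HomJ c c' :=
  ⟨fun m => hP.phi_mem_Jc hc' hx m, fun u m m' hm => by
    change K.Jmul m' _ = K.Jmul u (K.Jmul m _)
    rw [hm, hP.Jmul_assoc]⟩

lemma phi_single_of_mem_Dset (hP : LusztigProps K) {d : W} (hd : d ∈ K.Dset) (x : W) :
    K.phi x (Pi.single d 1) = (K.γ d x x⁻¹ : ℂ) • Pi.single x 1 := by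
  funext t
  rw [phi_apply, Fintype.sum_eq_single d fun p hp => by simp [hp]]
  rcases eq_or_ne t x with rfl | htx
  · simp
  · have hγ : K.γ d x t⁻¹ = 0 := by
      by_contra hγ
      rw [hP.P7] at hγ
      exact htx (by simpa using (hP.P2 d hd x t⁻¹ hγ).symm)
    simp [hγ, htx]

lemma linearIndependent_phi_domRestrict (hP : LusztigProps K) {c : Set W}
    (hc : K.IsLeftCell c) :
    LinearIndependent ℂ (fun x : ↥c⁻¹ => (K.phi (x : W)).domRestrict (K.Jc c)) := by
  obtain ⟨d, hdc, hdD, -, hdγ⟩ := hP.P13 c hc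
  have hd : (Pi.single d 1 : W → ℂ) ∈ K.Jc c := fun t ht =>
    Pi.single_eq_of_ne (ne_of_mem_of_not_mem hdc ht).symm 1
  have hγ : ∀ x : ↥c⁻¹, (K.γ d x (x : W)⁻¹ : ℂ) ≠ 0 := fun x => by
    rw [hP.P7, Int.cast_ne_zero]
    simpa using hdγ _ x.2
  have hsingle : LinearIndependent ℂ (fun x : ↥c⁻¹ => (Pi.single (x : W) 1 : W → ℂ)) :=
    (Pi.basisFun ℂ W).linearIndependent.comp _ Subtype.val_injective
  refine LinearIndependent.of_comp (LinearMap.applyₗ ⟨Pi.single d 1, hd⟩) ?_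
  convert hsingle.units_smul fun x => Units.mk0 _ (hγ x) using 1
  funext x
  exact hP.phi_single_of_mem_Dset hdD x

end LusztigProps

/-- **(Pietraho, proof of Lemma 3.3, after Lusztig.)**  Assume P1–P15.  For left cells
`𝔠, 𝔠'` and `x ∈ 𝔠⁻¹ ∩ 𝔠'`, the right multiplication `φ_x : t_y ↦ t_y t_x` maps
`J_ℂ^𝔠` into `J_ℂ^{𝔠'}`; as `x` ranges over `𝔠⁻¹ ∩ 𝔠'` the maps `φ_x` are linearly
independent; consequently `dim Hom_{J_ℂ}(J_ℂ^𝔠, J_ℂ^{𝔠'}) ≥ |𝔠⁻¹ ∩ 𝔠'|`. -/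
theorem phi_maps_and_linearIndependent_and_dim_ge
    {W : Type} [Group W] [Fintype W] (K : KLData W)
    (hP : LusztigProps K)
    (c c' : Set W) (hc : K.IsLeftCell c) (hc' : K.IsLeftCell c') :
    (∀ x ∈ c⁻¹ ∩ c', ∀ f ∈ K.Jc c, K.phi x f ∈ K.Jc c') ∧
    (LinearIndependent ℂ
      (fun x : ↥(c⁻¹ ∩ c') => (K.phi (x : W)).domRestrict (K.Jc c))) ∧
    (c⁻¹ ∩ c').ncard ≤ Module.finrank ℂ (K.HomJ c c') := by
  have hli : LinearIndependent ℂ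
      (fun x : ↥(c⁻¹ ∩ c') => (K.phi (x : W)).domRestrict (K.Jc c)) :=
    (hP.linearIndependent_phi_domRestrict hc).comp (Set.inclusion Set.inter_subset_left)
      (Set.inclusion_injective _)
  refine ⟨fun x hx f _ => hP.phi_mem_Jc hc' hx.2 f, hli, ?_⟩
  have hliHom : LinearIndependent ℂ (fun x : ↥(c⁻¹ ∩ c') =>
      (⟨_, hP.phi_domRestrict_mem_HomJ hc' x.2.2⟩ : K.HomJ c c')) :=
    LinearIndependent.of_comp (K.HomJ c c').subtype hli
  rw [← Nat.card_coe_set_eq, Nat.card_eq_fintype_card]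
  exact hliHom.fintype_card_le_finrank
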